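/- arXiv:1804.02640 — 2 statements merged into one kernel-verified Lean document; each statement's English description precedes it below -/
import Mathlib

section
/- Let U be a unitary operator on a complex Hilbert space that is complex symmetric with conjugation WJ, where W is unitary and J is a conjugation. Then a bounded operator A is WJ-symmetric (i.e., WJ A* WJ = A) if and only if UA is UWJ-symmetric (i.e., UWJ (UA)* UWJ = UA). -/
open scoped InnerProductSpace

/-- A conjugation on a complex inner product space: an antilinear, isometric involution. -/
def IsConjugation {H : Type*} [NormedAddCommGroup H] [InnerProductSpace ℂ H]
    (C : H → H) : Prop :=
  (∀ x y : H, C (x + y) = C x + C y) ∧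
  (∀ (a : ℂ) (x : H), C (a • x) = (starRingEnd ℂ) a • C x) ∧
  (∀ x y : H, ⟪C x, C y⟫_ℂ = ⟪y, x⟫_ℂ) ∧
  (∀ x : H, C (C x) = x)

/-- If `U` is unitary and complex symmetric with conjugation `W ∘ J` (`W` unitary, `J` a
conjugation), then `A` is `WJ`-symmetric iff `U ∘ A` is `UWJ`-symmetric. -/
theorem stmt1 {H : Type*} [NormedAddCommGroup H] [InnerProductSpace ℂ H] [CompleteSpace H]
    (U W : H →L[ℂ] H) (J : H → H)
    (hU : U ∘L ContinuousLinearMap.adjoint U = 1 ∧ ContinuousLinearMap.adjoint U ∘L U = 1)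
    (hW : W ∘L ContinuousLinearMap.adjoint W = 1 ∧ ContinuousLinearMap.adjoint W ∘L W = 1)
    (hJ : IsConjugation J)
    (hWJ : IsConjugation (fun x : H => W (J x)))
    (hUsym : ∀ x : H, W (J (ContinuousLinearMap.adjoint U (W (J x)))) = U x)
    (A : H →L[ℂ] H) :
    (∀ x : H, W (J (ContinuousLinearMap.adjoint A (W (J x)))) = A x) ↔
    (∀ x : H, U (W (J (ContinuousLinearMap.adjoint (U ∘L A) (U (W (J x)))))) = (U ∘L A) x) := by
  have hUsU : ∀ y : H, ContinuousLinearMap.adjoint U (U y) = y := fun y => by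
    have := congrArg (fun T : H →L[ℂ] H => T y) hU.2
    simpa using this
  have hUinj : Function.Injective U := fun a b hab => by
    have := congrArg (ContinuousLinearMap.adjoint U) hab
    rwa [hUsU, hUsU] at this
  have hadj : ContinuousLinearMap.adjoint (U ∘L A)
      = ContinuousLinearMap.adjoint A ∘L ContinuousLinearMap.adjoint U :=
    ContinuousLinearMap.adjoint_comp U A
  constructor
  · intro h x
    simp only [hadj, ContinuousLinearMap.comp_apply, hUsU]
    rw [h x]
  · intro h x
    have := h x
    simp only [hadj, ContinuousLinearMap.comp_apply, hUsU] at this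
    exact hUinj this
end

section
/- A bounded operator T on a complex Hilbert space H is both complex symmetric (with some conjugation C) and an isometry if and only if T is unitary. -/
open scoped InnerProductSpace

/-! If `C T* C = T` then `T* = C T C`, so `T T* = C T* T C = 1` as soon as `T` is an isometry.

Conversely, for a unitary `U`, Zorn's lemma gives a set `S` whose orbits `{Uⁿ s}` span mutually
orthogonal subspaces with dense sum. The antilinear assignment `Uⁿ s ↦ U⁻ⁿ s` turns the Gram
matrix of the orbits into its transpose, so it extends to an antilinear `C` with
`⟪C x, C y⟫ = ⟪y, x⟫`; on the orbits one checks `C² = 1` and `C U* C = U`. -/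

section Antilinear

variable {𝕜 ι E F : Type*} [RCLike 𝕜]
  [NormedAddCommGroup E] [InnerProductSpace 𝕜 E] [NormedAddCommGroup F] [InnerProductSpace 𝕜 F]

noncomputable def conjLinearCombination (w : ι → F) : (ι →₀ 𝕜) →ₗ⋆[𝕜] F :=
  (Finsupp.linearCombination 𝕜 w).comp
    (Finsupp.mapRange.linearMap (starLinearEquiv 𝕜 (A := 𝕜)).toLinearMap)

@[simp]
theorem conjLinearCombination_single (w : ι → F) (i : ι) (c : 𝕜) :
    conjLinearCombination w (Finsupp.single i c) = star c • w i := by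
  simp [conjLinearCombination]

theorem inner_conjLinearCombination {v : ι → E} {w : ι → F}
    (hvw : ∀ i j, ⟪w i, w j⟫_𝕜 = ⟪v j, v i⟫_𝕜) (a b : ι →₀ 𝕜) :
    ⟪conjLinearCombination w a, conjLinearCombination w b⟫_𝕜 =
      ⟪Finsupp.linearCombination 𝕜 v b, Finsupp.linearCombination 𝕜 v a⟫_𝕜 := by
  induction a using Finsupp.induction_linear with
  | zero => simp
  | add a a' ha ha' => simp only [map_add, inner_add_left, inner_add_right, ha, ha']
  | single i c =>
    induction b using Finsupp.induction_linear with
    | zero => simp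
    | add b b' hb hb' => simp only [map_add, inner_add_left, inner_add_right, hb, hb']
    | single j d =>
      simp only [conjLinearCombination_single, Finsupp.linearCombination_single,
        inner_smul_left, inner_smul_right, hvw]
      simp only [RCLike.star_def, RCLike.conj_conj]
      ring

variable [CompleteSpace F]

theorem Submodule.exists_conjLinear_extension_of_inner_swap {V : Submodule 𝕜 E}
    (hV : Dense (V : Set E)) (f : V →ₗ⋆[𝕜] F) (hf : ∀ x y, ⟪f x, f y⟫_𝕜 = ⟪(y : E), x⟫_𝕜) :
    ∃ C : E →L⋆[𝕜] F, (∀ x : V, C x = f x) ∧ ∀ x y, ⟪C x, C y⟫_𝕜 = ⟪y, x⟫_𝕜 := by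
  have hnorm (x : V) : ‖f x‖ = ‖x‖ := by
    rw [norm_eq_sqrt_re_inner (𝕜 := 𝕜), hf, Submodule.coe_norm, norm_eq_sqrt_re_inner (𝕜 := 𝕜)]
  let f' : V →L⋆[𝕜] F :=
    ({ f with norm_map' := hnorm } : V →ₛₗᵢ[starRingEnd 𝕜] F).toContinuousLinearMap
  have hd : DenseRange V.subtypeL := by simpa [DenseRange] using hV
  have hu : IsUniformInducing V.subtypeL := isometry_subtype_coe.isUniformInducing
  set C := f'.extend V.subtypeL
  have hCf (x : V) : C x = f x := f'.extend_eq hd hu x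
  refine ⟨C, hCf, fun x y => ?_⟩
  refine hd.induction_on₂ (p := fun x y => ⟪C x, C y⟫_𝕜 = ⟪y, x⟫_𝕜) ?_ (fun x y => ?_) x y
  · exact isClosed_eq (by fun_prop) (by fun_prop)
  · simp only [Submodule.subtypeL_apply, hCf, hf]

theorem exists_conjLinear_apply_eq_of_inner_swap {v : ι → E} {w : ι → F}
    (hv : Dense (Submodule.span 𝕜 (Set.range v) : Set E))
    (hvw : ∀ i j, ⟪w i, w j⟫_𝕜 = ⟪v j, v i⟫_𝕜) :
    ∃ C : E →L⋆[𝕜] F, (∀ i, C (v i) = w i) ∧ ∀ x y, ⟪C x, C y⟫_𝕜 = ⟪y, x⟫_𝕜 := by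
  set Φ := Finsupp.linearCombination 𝕜 v
  set Ψ := conjLinearCombination (𝕜 := 𝕜) w
  have hker : LinearMap.ker Φ ≤ LinearMap.ker Ψ := fun a ha => by
    rw [LinearMap.mem_ker] at ha ⊢
    rw [← inner_self_eq_zero (𝕜 := 𝕜), inner_conjLinearCombination hvw, ha, inner_zero_left]
  let f : LinearMap.range Φ →ₗ⋆[𝕜] F :=
    ((LinearMap.ker Φ).liftQ Ψ hker).comp Φ.quotKerEquivRange.symm.toLinearMap
  have hf (a : ι →₀ 𝕜) : f (Φ.rangeRestrict a) = Ψ a := by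
    have : Φ.quotKerEquivRange.symm (Φ.rangeRestrict a) = Submodule.Quotient.mk a :=
      (LinearEquiv.symm_apply_eq _).2 (Subtype.ext (Φ.quotKerEquivRange_apply_mk a).symm)
    simp only [f, LinearMap.comp_apply, LinearEquiv.coe_coe, this, Submodule.liftQ_apply]
  have hf_inner (x y : LinearMap.range Φ) : ⟪f x, f y⟫_𝕜 = ⟪(y : E), x⟫_𝕜 := by
    obtain ⟨a, rfl⟩ := Φ.surjective_rangeRestrict x
    obtain ⟨b, rfl⟩ := Φ.surjective_rangeRestrict y
    rw [hf, hf]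
    exact inner_conjLinearCombination hvw a b
  obtain ⟨C, hCf, hC⟩ := Submodule.exists_conjLinear_extension_of_inner_swap
    (by rwa [Finsupp.range_linearCombination]) f hf_inner
  refine ⟨C, fun i => ?_, hC⟩
  have := hCf (Φ.rangeRestrict (Finsupp.single i 1))
  rwa [hf, conjLinearCombination_single, star_one, one_smul, LinearMap.codRestrict_apply,
    Finsupp.linearCombination_single, one_smul] at this

end Antilinear

namespace LinearIsometryEquiv

variable {𝕜 H : Type*} [RCLike 𝕜] [NormedAddCommGroup H] [InnerProductSpace 𝕜 H]
  (U : H ≃ₗᵢ[𝕜] H)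

theorem zpow_apply_zpow_apply (m n : ℤ) (x : H) : (U ^ m) ((U ^ n) x) = (U ^ (m + n)) x := by
  rw [zpow_add, coe_mul, Function.comp_apply]

theorem inner_zpow_apply_left (n : ℤ) (x y : H) :
    ⟪(U ^ n) x, y⟫_𝕜 = ⟪x, (U ^ (-n)) y⟫_𝕜 := by
  rw [← (U ^ n).inner_map_map x, zpow_apply_zpow_apply, add_neg_cancel, zpow_zero, coe_one, id]

theorem inner_zpow_apply_zpow_apply (m n : ℤ) (x y : H) :
    ⟪(U ^ m) x, (U ^ n) y⟫_𝕜 = ⟪x, (U ^ (n - m)) y⟫_𝕜 := by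
  rw [inner_zpow_apply_left, zpow_apply_zpow_apply, neg_add_eq_sub]

theorem exists_dense_span_zpow_orbits [CompleteSpace H] :
    ∃ S : Set H, S.Pairwise (fun x y => ∀ n : ℤ, ⟪x, (U ^ n) y⟫_𝕜 = 0) ∧
      Dense (Submodule.span 𝕜 (Set.range fun p : S × ℤ => (U ^ p.2) (p.1 : H)) : Set H) := by
  set r : H → H → Prop := fun x y => ∀ n : ℤ, ⟪x, (U ^ n) y⟫_𝕜 = 0
  have r_symm {x y : H} (h : r x y) : r y x := fun n => by
    rw [inner_eq_zero_symm, inner_zpow_apply_left, h]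
  obtain ⟨S, hmax⟩ := zorn_subset {S : Set H | S.Pairwise r} fun c hc hchain =>
    ⟨⋃₀ c, (Set.pairwise_sUnion hchain.directedOn).2 hc, fun _ => Set.subset_sUnion_of_mem⟩
  have hS : S.Pairwise r := hmax.prop
  refine ⟨S, hS, ?_⟩
  rw [Submodule.dense_iff_topologicalClosure_eq_top, Submodule.topologicalClosure_eq_top_iff,
    Submodule.eq_bot_iff]
  intro z hz
  have hz_orbit (y : H) (hy : y ∈ S) : r z y := fun n => by
    rw [inner_eq_zero_symm]
    exact (Submodule.mem_orthogonal _ z).1 hz _ (Submodule.subset_span ⟨(⟨y, hy⟩, n), rfl⟩)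
  have hzS : z ∈ S := hmax.mem_of_prop_insert <|
    hS.insert fun y hy _ => ⟨hz_orbit y hy, r_symm (hz_orbit y hy)⟩
  simpa using hz_orbit z hzS 0

theorem exists_conj_comp_symm_comp_conj_eq [CompleteSpace H] :
    ∃ C : H →L⋆[𝕜] H, (∀ x, C (C x) = x) ∧ (∀ x y, ⟪C x, C y⟫_𝕜 = ⟪y, x⟫_𝕜) ∧
      ∀ x, C (U.symm (C x)) = U x := by
  obtain ⟨S, hS, hdense⟩ := U.exists_dense_span_zpow_orbits
  have hgram (p q : S × ℤ) :
      ⟪(U ^ (-p.2)) p.1, (U ^ (-q.2)) q.1⟫_𝕜 = ⟪(U ^ q.2) q.1, (U ^ p.2) p.1⟫_𝕜 := by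
    rw [inner_zpow_apply_zpow_apply, inner_zpow_apply_zpow_apply]
    by_cases hpq : (p.1 : H) = q.1
    · rw [hpq, neg_sub_neg]
    · rw [hS p.1.2 q.1.2 hpq, hS q.1.2 p.1.2 (Ne.symm hpq)]
  obtain ⟨C, hCv, hC⟩ := exists_conjLinear_apply_eq_of_inner_swap hdense hgram
  have hCw (s : S) (n : ℤ) : C ((U ^ n) s) = (U ^ (-n)) s := hCv (s, n)
  refine ⟨C, fun x => ?_, hC, fun x => ?_⟩
  · have hCC : C.comp C = ContinuousLinearMap.id 𝕜 H := by
      refine ContinuousLinearMap.ext_on hdense ?_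
      rintro _ ⟨⟨s, n⟩, rfl⟩
      simp only [ContinuousLinearMap.comp_apply, hCw, neg_neg, ContinuousLinearMap.id_apply]
    exact congr($hCC x)
  · have hCUC : C.comp ((U.symm : H →L[𝕜] H).comp C) = U := by
      refine ContinuousLinearMap.ext_on hdense ?_
      rintro _ ⟨⟨s, n⟩, rfl⟩
      have hsymm : ⇑U.symm = ⇑(U ^ (-1 : ℤ)) := by rw [zpow_neg_one, coe_inv]
      simp only [ContinuousLinearMap.comp_apply, ContinuousLinearEquiv.coe_coe,
        coe_toContinuousLinearEquiv, hCw, hsymm, zpow_apply_zpow_apply]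
      rw [neg_add, neg_neg, neg_neg, ← zpow_apply_zpow_apply, zpow_one]
    exact congr($hCUC x)

end LinearIsometryEquiv

theorem ContinuousLinearMap.isConjugation {H : Type*} [NormedAddCommGroup H]
    [InnerProductSpace ℂ H] {C : H →L⋆[ℂ] H} (hCC : ∀ x, C (C x) = x)
    (hC : ∀ x y, ⟪C x, C y⟫_ℂ = ⟪y, x⟫_ℂ) : IsConjugation C :=
  ⟨map_add C, map_smulₛₗ C, hC, hCC⟩

theorem ContinuousLinearMap.comp_adjoint_eq_one_of_conj {𝕜 H : Type*} [RCLike 𝕜]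
    [NormedAddCommGroup H] [InnerProductSpace 𝕜 H] [CompleteSpace H] {T : H →L[𝕜] H}
    {C : H → H} (hCC : ∀ x, C (C x) = x) (hCT : ∀ x, C (adjoint T (C x)) = T x)
    (hT : adjoint T ∘L T = 1) : T ∘L adjoint T = 1 := by
  have hadj (x : H) : adjoint T x = C (T (C x)) := by simp only [← hCT, hCC]
  ext x
  rw [comp_apply, hadj, ← hCT, hCC, ← comp_apply, hT]
  exact hCC x

/-- A bounded operator `T` on a complex Hilbert space is both complex symmetric (with some
conjugation `C`) and an isometry if and only if `T` is unitary. -/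
theorem stmt2 {H : Type*} [NormedAddCommGroup H] [InnerProductSpace ℂ H] [CompleteSpace H]
    (T : H →L[ℂ] H) :
    ((∃ C : H → H, IsConjugation C ∧
        ∀ x : H, C (ContinuousLinearMap.adjoint T (C x)) = T x) ∧
      (∀ x : H, ‖T x‖ = ‖x‖)) ↔
    (ContinuousLinearMap.adjoint T ∘L T = 1 ∧ T ∘L ContinuousLinearMap.adjoint T = 1) := by
  rw [ContinuousLinearMap.norm_map_iff_adjoint_comp_self]
  constructor
  · rintro ⟨⟨C, hC, hCT⟩, hT⟩
    exact ⟨hT, T.comp_adjoint_eq_one_of_conj hC.2.2.2 hCT hT⟩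
  · rintro ⟨hT, hT'⟩
    let U := Unitary.linearIsometryEquiv ⟨T, Unitary.mem_iff.2 ⟨hT, hT'⟩⟩
    obtain ⟨C, hCC, hC, hCU⟩ := U.exists_conj_comp_symm_comp_conj_eq
    have hadj : ContinuousLinearMap.adjoint T = U.symm := U.adjoint_eq_symm
    exact ⟨⟨C, ContinuousLinearMap.isConjugation hCC hC, fun x => by rw [hadj]; exact hCU x⟩, hT⟩
end
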